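/- In an (I,O)-chain, for any valid Boolean orientation assignment (no connector adjacent to three or more buses of the same orientation), the buses I and O receive the same orientation; that is, I and O are parallel in any realization. -/
import Mathlib


def ValidConn {α : Type} [DecidableEq α] (o : α → Bool) (S : Finset α) : Prop :=
  ∀ v : Bool, (S.filter fun b => o b = v).card ≤ 2

/-- The 15 connector neighborhoods of an (I,O)-chain. Buses are numbered:
flipper 1: A=0, A'=1, I=2, I'=3, C=4 (output connector o₁ = {2,3,7});
flipper 2: A=5, A'=6, I₁=7, I₁'=8, C=9 (output connector o₂ = {7,8,12});
flipper 3: A=10, A'=11, I₂=12, I₂'=13, C=14 (output connector o₃ = {12,13,15});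
final (I₃,O)-perp: I₃=15, I₃'=16, O=17, O'=18, C=19. -/
def chainConns : List (Finset (Fin 20)) :=
  [{0,1,2,3}, {0,1,2,4}, {0,1,3,4}, {2,3,7},
   {5,6,7,8}, {5,6,7,9}, {5,6,8,9}, {7,8,12},
   {10,11,12,13}, {10,11,12,14}, {10,11,13,14}, {12,13,15},
   {15,16,17,18}, {15,16,17,19}, {15,16,18,19}]

/-- No three equal among four Booleans. -/
def N3 (p q r s : Bool) : Prop :=
  ¬(p = q ∧ p = r) ∧ ¬(p = q ∧ p = s) ∧ ¬(p = r ∧ p = s) ∧ ¬(q = r ∧ q = s)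

lemma not_three {α : Type} [DecidableEq α] {o : α → Bool} {S : Finset α}
    (h : ValidConn o S) {a b c : α} (ha : a ∈ S) (hb : b ∈ S) (hc : c ∈ S)
    (hab : a ≠ b) (hac : a ≠ c) (hbc : b ≠ c) :
    ¬(o a = o b ∧ o a = o c) := by
  rintro ⟨h1, h2⟩
  have hsub : ({a, b, c} : Finset α) ⊆ S.filter (fun x => o x = o a) := by
    intro x hx
    simp only [Finset.mem_insert, Finset.mem_singleton] at hx
    rcases hx with rfl | rfl | rfl <;>
      simp [Finset.mem_filter, ha, hb, hc, h1.symm, h2.symm]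
  have hle := Finset.card_le_card hsub
  have hcard : ({a, b, c} : Finset α).card = 3 := by
    rw [Finset.card_insert_of_notMem (by simp [hab, hac]),
        Finset.card_insert_of_notMem (by simp [hbc]), Finset.card_singleton]
  have := h (o a)
  omega

lemma n3_of_valid {o : Fin 20 → Bool} {S : Finset (Fin 20)} (h : ValidConn o S)
    {a b c d : Fin 20} (ha : a ∈ S) (hb : b ∈ S) (hc : c ∈ S) (hd : d ∈ S)
    (hab : a ≠ b) (hac : a ≠ c) (had : a ≠ d) (hbc : b ≠ c) (hbd : b ≠ d)
    (hcd : c ≠ d) :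
    N3 (o a) (o b) (o c) (o d) :=
  ⟨not_three h ha hb hc hab hac hbc, not_three h ha hb hd hab had hbd,
   not_three h ha hc hd hac had hcd, not_three h hb hc hd hbc hbd hcd⟩

/-- The perp lemma over Booleans. -/
lemma perpB : ∀ a a' x x' c : Bool,
    N3 a a' x x' → N3 a a' x c → N3 a a' x' c → x = !a ∧ x' = !a := by
  intro a a' x x' c h1 h2 h3
  cases a <;> cases a' <;> cases x <;> cases x' <;> cases c <;> simp_all [N3]

/-- Output connector of a flipper: forces the next bus perpendicular. -/
lemma outB : ∀ x x' n : Bool, x = x' → ¬(x = x' ∧ x = n) → n = !x := by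
  intro x x' n h1 h2
  cases x <;> cases x' <;> cases n <;> simp_all

/-- In an (I,O)-chain, any valid orientation assignment (no connector adjacent
to three buses of the same orientation) orients I (bus 2) and O (bus 17) the
same way: I and O are parallel. -/
theorem chain_parallel (o : Fin 20 → Bool)
    (hvalid : ∀ S ∈ chainConns, ValidConn o S) :
    o 2 = o 17 := by
  have h0 := hvalid {0,1,2,3} (by simp [chainConns])
  have h1 := hvalid {0,1,2,4} (by simp [chainConns])
  have h2 := hvalid {0,1,3,4} (by simp [chainConns])
  have h3 := hvalid {2,3,7} (by simp [chainConns])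
  have h4 := hvalid {5,6,7,8} (by simp [chainConns])
  have h5 := hvalid {5,6,7,9} (by simp [chainConns])
  have h6 := hvalid {5,6,8,9} (by simp [chainConns])
  have h7 := hvalid {7,8,12} (by simp [chainConns])
  have h8 := hvalid {10,11,12,13} (by simp [chainConns])
  have h9 := hvalid {10,11,12,14} (by simp [chainConns])
  have h10 := hvalid {10,11,13,14} (by simp [chainConns])
  have h11 := hvalid {12,13,15} (by simp [chainConns])
  have h12 := hvalid {15,16,17,18} (by simp [chainConns])
  have h13 := hvalid {15,16,17,19} (by simp [chainConns])
  have h14 := hvalid {15,16,18,19} (by simp [chainConns])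
  -- perp of flipper 1: buses A=0, A'=1, I=2, I'=3, C=4
  have p1 := perpB (o 0) (o 1) (o 2) (o 3) (o 4)
    (n3_of_valid h0 (by decide) (by decide) (by decide) (by decide)
      (by decide) (by decide) (by decide) (by decide) (by decide) (by decide))
    (n3_of_valid h1 (by decide) (by decide) (by decide) (by decide)
      (by decide) (by decide) (by decide) (by decide) (by decide) (by decide))
    (n3_of_valid h2 (by decide) (by decide) (by decide) (by decide)
      (by decide) (by decide) (by decide) (by decide) (by decide) (by decide))
  have e23 : o 2 = o 3 := by rw [p1.1, p1.2]
  have o7 : o 7 = !(o 2) := outB (o 2) (o 3) (o 7) e23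
    (not_three h3 (by decide) (by decide) (by decide) (by decide) (by decide) (by decide))
  -- perp of flipper 2
  have p2 := perpB (o 5) (o 6) (o 7) (o 8) (o 9)
    (n3_of_valid h4 (by decide) (by decide) (by decide) (by decide)
      (by decide) (by decide) (by decide) (by decide) (by decide) (by decide))
    (n3_of_valid h5 (by decide) (by decide) (by decide) (by decide)
      (by decide) (by decide) (by decide) (by decide) (by decide) (by decide))
    (n3_of_valid h6 (by decide) (by decide) (by decide) (by decide)
      (by decide) (by decide) (by decide) (by decide) (by decide) (by decide))
  have e78 : o 7 = o 8 := by rw [p2.1, p2.2]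
  have o12 : o 12 = !(o 7) := outB (o 7) (o 8) (o 12) e78
    (not_three h7 (by decide) (by decide) (by decide) (by decide) (by decide) (by decide))
  -- perp of flipper 3
  have p3 := perpB (o 10) (o 11) (o 12) (o 13) (o 14)
    (n3_of_valid h8 (by decide) (by decide) (by decide) (by decide)
      (by decide) (by decide) (by decide) (by decide) (by decide) (by decide))
    (n3_of_valid h9 (by decide) (by decide) (by decide) (by decide)
      (by decide) (by decide) (by decide) (by decide) (by decide) (by decide))
    (n3_of_valid h10 (by decide) (by decide) (by decide) (by decide)
      (by decide) (by decide) (by decide) (by decide) (by decide) (by decide))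
  have e1213 : o 12 = o 13 := by rw [p3.1, p3.2]
  have o15 : o 15 = !(o 12) := outB (o 12) (o 13) (o 15) e1213
    (not_three h11 (by decide) (by decide) (by decide) (by decide) (by decide) (by decide))
  -- final perp
  have p4 := perpB (o 15) (o 16) (o 17) (o 18) (o 19)
    (n3_of_valid h12 (by decide) (by decide) (by decide) (by decide)
      (by decide) (by decide) (by decide) (by decide) (by decide) (by decide))
    (n3_of_valid h13 (by decide) (by decide) (by decide) (by decide)
      (by decide) (by decide) (by decide) (by decide) (by decide) (by decide))
    (n3_of_valid h14 (by decide) (by decide) (by decide) (by decide)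
      (by decide) (by decide) (by decide) (by decide) (by decide) (by decide))
  have : o 17 = !(o 15) := p4.1
  rw [this, o15, o12, o7]
  simp
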